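/- Pointwise decomposition of the predictive log-likelihood ratio under the Horseshoe prior (Lemma on g̃): Fix r > 0, set v = r/(1+r), and fix τ > 0. Define D(y) = ∫_ℝ exp(−μ²/2 + yμ) π(μ|τ) dμ and N_v(y,ỹ) = ∫_ℝ exp(−μ²/(2v) + (y + ỹ/r)μ) π(μ|τ) dμ. Then: (i) D(y) = (τ/π) ∫₀¹ u^{−1/2} (τ² + (1−τ²)u)^{−1} exp(y²u/2) du; (ii) N_v(y,ỹ) = (τ/(π√v)) ∫₀¹ u^{−1/2} (τ²/v + (1−τ²/v)u)^{−1} exp( (v/2)(y+ỹ/r)² u ) du; and (iii) for all θ, y, ỹ ∈ ℝ, log( φ_r(ỹ−θ) / p̂_π(ỹ|y) ) = ỹθ/r − θ²/(2r) − log N_v(y,ỹ) + log D(y), where p̂_π is the posterior predictive density under the Horseshoe prior π(·|τ). -/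

import Mathlib

open MeasureTheory
open scoped Classical

/-- Density of `N(0,s)`. -/
noncomputable def gauss (s x : ℝ) : ℝ :=
  (Real.sqrt (2 * Real.pi * s))⁻¹ * Real.exp (-x ^ 2 / (2 * s))

/-- Univariate Horseshoe prior density with global scale `τ`. -/
noncomputable def hs (τ θ : ℝ) : ℝ :=
  ∫ l in Set.Ioi (0 : ℝ), gauss (l ^ 2 * τ ^ 2) θ * ((2 / Real.pi) * (1 + l ^ 2)⁻¹)

/-- Univariate posterior predictive density under prior density `g`. -/
noncomputable def pred (r : ℝ) (g : ℝ → ℝ) (y ty : ℝ) : ℝ :=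
  (∫ μ : ℝ, gauss r (ty - μ) * gauss 1 (y - μ) * g μ) /
    ∫ μ : ℝ, gauss 1 (y - μ) * g μ

/-- `D(y)` from the pointwise decomposition of the predictive log-likelihood ratio. -/
noncomputable def Dfun (τ y : ℝ) : ℝ :=
  ∫ μ : ℝ, Real.exp (-μ ^ 2 / 2 + y * μ) * hs τ μ

/-- `N_v(y,ỹ)` from the pointwise decomposition of the predictive log-likelihood ratio. -/
noncomputable def Nvfun (r v τ y ty : ℝ) : ℝ :=
  ∫ μ : ℝ, Real.exp (-μ ^ 2 / (2 * v) + (y + ty / r) * μ) * hs τ μ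

open Real Set

/-!
The Horseshoe prior is a scale mixture of normals with half-Cauchy mixing density
`(2/π)(1+λ²)⁻¹`. Against `N(0, λ²τ²)` the factor `exp(-μ²/2 + cμ)` integrates in closed form to
`(1+λ²τ²)^(-1/2) exp(c²λ²τ²/(2(1+λ²τ²)))`; after Fubini, the substitution `u = λ²τ²/(1+λ²τ²)`
turns the remaining `λ`-integral into (i), and positivity of that integrand gives `D > 0`.
Rescaling `μ = √v ξ` identifies `N_v(y,ỹ)` with `D` at scale `τ/√v` and argument `√v(y + ỹ/r)`,
which gives (ii). Finally `φ_r(ỹ-μ)φ(y-μ) = φ_r(ỹ)φ(y) exp(-μ²/(2v) + (y+ỹ/r)μ)` because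
`1/v = 1 + 1/r`, so `p̂(ỹ|y) = φ_r(ỹ) N_v(y,ỹ)/D(y)` and (iii) follows by taking logarithms.
-/

lemma exp_neg_mul_sq_add_mul {b : ℝ} (hb : b ≠ 0) (c x : ℝ) :
    exp (-b * x ^ 2 + c * x) = exp (-b * (x - c / (2 * b)) ^ 2) * exp (c ^ 2 / (4 * b)) := by
  rw [← exp_add]
  congr 1
  field_simp
  ring

lemma integrable_exp_neg_mul_sq_add_mul {b : ℝ} (hb : 0 < b) (c : ℝ) :
    Integrable fun x : ℝ ↦ exp (-b * x ^ 2 + c * x) := by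
  simp_rw [exp_neg_mul_sq_add_mul hb.ne']
  exact ((integrable_exp_neg_mul_sq hb).comp_sub_right _).mul_const _

lemma integral_exp_neg_mul_sq_add_mul {b : ℝ} (hb : 0 < b) (c : ℝ) :
    ∫ x : ℝ, exp (-b * x ^ 2 + c * x) = √(π / b) * exp (c ^ 2 / (4 * b)) := by
  simp_rw [exp_neg_mul_sq_add_mul hb.ne']
  rw [integral_mul_const, integral_sub_right_eq_self (fun x ↦ exp (-b * x ^ 2)),
    integral_gaussian]

lemma gauss_nonneg (s x : ℝ) : 0 ≤ gauss s x := by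
  unfold gauss
  positivity

lemma gauss_pos {s : ℝ} (hs : 0 < s) (x : ℝ) : 0 < gauss s x := by
  unfold gauss
  positivity

lemma exp_mul_gauss {s : ℝ} (hs : 0 < s) (c μ : ℝ) :
    exp (-μ ^ 2 / 2 + c * μ) * gauss s μ =
      (√(2 * π * s))⁻¹ * exp (-((1 + s) / (2 * s)) * μ ^ 2 + c * μ) := by
  rw [gauss, mul_left_comm, ← exp_add]
  congr 2
  field_simp
  ring

lemma integrable_exp_mul_gauss {s : ℝ} (hs : 0 < s) (c : ℝ) :
    Integrable fun μ : ℝ ↦ exp (-μ ^ 2 / 2 + c * μ) * gauss s μ := by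
  simp_rw [exp_mul_gauss hs]
  exact (integrable_exp_neg_mul_sq_add_mul (by positivity) c).const_mul _

lemma integral_exp_mul_gauss {s : ℝ} (hs : 0 < s) (c : ℝ) :
    ∫ μ : ℝ, exp (-μ ^ 2 / 2 + c * μ) * gauss s μ =
      (√(1 + s))⁻¹ * exp (c ^ 2 * s / (2 * (1 + s))) := by
  simp_rw [exp_mul_gauss hs]
  rw [integral_const_mul, integral_exp_neg_mul_sq_add_mul (by positivity)]
  have hvar : π / ((1 + s) / (2 * s)) = (2 * π * s) / (1 + s) := by field_simp
  rw [hvar, sqrt_div (by positivity), ← mul_assoc, inv_mul_eq_div,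
    div_div_cancel_left' (by positivity)]
  congr 2
  field_simp
  ring

noncomputable def dfunScaleIntegrand (t c l : ℝ) : ℝ :=
  (√(1 + l ^ 2 * t ^ 2))⁻¹ * exp (c ^ 2 * (l ^ 2 * t ^ 2) / (2 * (1 + l ^ 2 * t ^ 2))) *
    (2 / π * (1 + l ^ 2)⁻¹)

lemma dfunScaleIntegrand_pos (t c l : ℝ) : 0 < dfunScaleIntegrand t c l := by
  unfold dfunScaleIntegrand
  have := pi_pos
  positivity

lemma dfunScaleIntegrand_le (t c l : ℝ) :
    dfunScaleIntegrand t c l ≤ exp (c ^ 2 / 2) * (2 / π * (1 + l ^ 2)⁻¹) := by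
  have hw : 0 ≤ l ^ 2 * t ^ 2 := by positivity
  have hsqrt : (√(1 + l ^ 2 * t ^ 2))⁻¹ ≤ 1 :=
    inv_le_one_of_one_le₀ (one_le_sqrt.2 (by linarith))
  have hexp : exp (c ^ 2 * (l ^ 2 * t ^ 2) / (2 * (1 + l ^ 2 * t ^ 2))) ≤ exp (c ^ 2 / 2) := by
    refine exp_le_exp.2 ((div_le_div_iff₀ (by positivity) (by positivity)).2 ?_)
    nlinarith [sq_nonneg c]
  unfold dfunScaleIntegrand
  have := pi_pos
  calc _ ≤ 1 * exp (c ^ 2 / 2) * (2 / π * (1 + l ^ 2)⁻¹) := by gcongr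
    _ = _ := by rw [one_mul]

lemma continuous_dfunScaleIntegrand (t c : ℝ) : Continuous (dfunScaleIntegrand t c) := by
  unfold dfunScaleIntegrand
  refine .mul (.mul (.inv₀ (by fun_prop) fun l ↦ by positivity) (.rexp (.div (by fun_prop)
    (by fun_prop) fun l ↦ by positivity))) (.mul continuous_const (.inv₀ (by fun_prop)
    fun l ↦ by positivity))

lemma integrable_dfunScaleIntegrand (t c : ℝ) : Integrable (dfunScaleIntegrand t c) := by
  refine Integrable.mono' (g := fun l ↦ exp (c ^ 2 / 2) * (2 / π * (1 + l ^ 2)⁻¹))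
    ((integrable_inv_one_add_sq.const_mul _).const_mul _)
    (continuous_dfunScaleIntegrand t c).aestronglyMeasurable (.of_forall fun l ↦ ?_)
  rw [norm_of_nonneg (dfunScaleIntegrand_pos t c l).le]
  exact dfunScaleIntegrand_le t c l

lemma integral_exp_mul_hs_integrand {t l : ℝ} (ht : 0 < t) (hl : 0 < l) (c : ℝ) :
    ∫ μ : ℝ, exp (-μ ^ 2 / 2 + c * μ) * (gauss (l ^ 2 * t ^ 2) μ * (2 / π * (1 + l ^ 2)⁻¹)) =
      dfunScaleIntegrand t c l := by
  simp only [← mul_assoc (rexp _)]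
  rw [integral_mul_const, integral_exp_mul_gauss (by positivity), dfunScaleIntegrand]

lemma integrable_exp_mul_hs_integrand {t : ℝ} (ht : 0 < t) (c : ℝ) :
    Integrable (fun p : ℝ × ℝ ↦
        exp (-p.1 ^ 2 / 2 + c * p.1) * (gauss (p.2 ^ 2 * t ^ 2) p.1 * (2 / π * (1 + p.2 ^ 2)⁻¹)))
      (volume.prod (volume.restrict (Ioi 0))) := by
  have hmeas : Measurable fun p : ℝ × ℝ ↦
      exp (-p.1 ^ 2 / 2 + c * p.1) * (gauss (p.2 ^ 2 * t ^ 2) p.1 * (2 / π * (1 + p.2 ^ 2)⁻¹)) := by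
    unfold gauss
    fun_prop
  rw [integrable_prod_iff' hmeas.aestronglyMeasurable]
  refine ⟨ae_restrict_of_forall_mem measurableSet_Ioi fun l hl ↦ ?_,
    (integrable_dfunScaleIntegrand t c).integrableOn.congr_fun (fun l hl ↦ ?_) measurableSet_Ioi⟩
  · simp only [← mul_assoc (rexp _)]
    exact (integrable_exp_mul_gauss (by have : 0 < l := hl; positivity) c).mul_const _
  · have hnonneg : ∀ μ : ℝ, 0 ≤ exp (-μ ^ 2 / 2 + c * μ) *
        (gauss (l ^ 2 * t ^ 2) μ * (2 / π * (1 + l ^ 2)⁻¹)) := fun μ ↦ by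
      have := gauss_nonneg (l ^ 2 * t ^ 2) μ
      have := pi_pos
      positivity
    simp_rw [norm_of_nonneg (hnonneg _)]
    exact (integral_exp_mul_hs_integrand ht hl c).symm

lemma Dfun_eq_setIntegral_dfunScaleIntegrand {t : ℝ} (ht : 0 < t) (c : ℝ) :
    Dfun t c = ∫ l in Ioi 0, dfunScaleIntegrand t c l := by
  unfold Dfun hs
  simp_rw [← integral_const_mul]
  rw [integral_integral_swap (integrable_exp_mul_hs_integrand ht c)]
  exact setIntegral_congr_fun measurableSet_Ioi fun l hl ↦ integral_exp_mul_hs_integrand ht hl c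

lemma Dfun_pos {t : ℝ} (ht : 0 < t) (c : ℝ) : 0 < Dfun t c := by
  rw [Dfun_eq_setIntegral_dfunScaleIntegrand ht,
    setIntegral_pos_iff_support_of_nonneg_ae
      (.of_forall fun l ↦ (dfunScaleIntegrand_pos t c l).le)
      (integrable_dfunScaleIntegrand t c).integrableOn,
    (Function.support_eq_univ fun l ↦ (dfunScaleIntegrand_pos t c l).ne'), univ_inter, volume_Ioi]
  exact ENNReal.zero_lt_top

/-- The local scale `λ` with `λ²t²/(1+λ²t²) = u`; `1 - u` is the Horseshoe shrinkage coefficient. -/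
noncomputable def scaleOfWeight (t u : ℝ) : ℝ := √(u / (1 - u)) / t

lemma bijOn_scaleOfWeight {t : ℝ} (ht : 0 < t) : BijOn (scaleOfWeight t) (Ioo 0 1) (Ioi 0) := by
  refine InvOn.bijOn (f' := fun l ↦ l ^ 2 * t ^ 2 / (1 + l ^ 2 * t ^ 2))
    ⟨fun u hu ↦ ?_, fun l hl ↦ ?_⟩
    (fun u hu ↦ div_pos (sqrt_pos.2 (div_pos hu.1 (sub_pos.2 hu.2))) ht) fun l hl ↦ ?_
  · have h1u : 0 < 1 - u := sub_pos.2 hu.2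
    simp only [scaleOfWeight, div_pow, sq_sqrt (div_pos hu.1 h1u).le]
    field_simp
    ring
  · have hl : 0 < l := hl
    have hratio : l ^ 2 * t ^ 2 / (1 + l ^ 2 * t ^ 2) / (1 - l ^ 2 * t ^ 2 / (1 + l ^ 2 * t ^ 2)) =
        (l * t) ^ 2 := by
      field_simp
      ring
    rw [scaleOfWeight, hratio, sqrt_sq (by positivity), mul_div_cancel_right₀ _ ht.ne']
  · have hw : 0 < l ^ 2 * t ^ 2 := by have : 0 < l := hl; positivity
    exact ⟨by positivity, (div_lt_one (by positivity)).2 (by linarith)⟩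

lemma hasDerivAt_scaleOfWeight (t : ℝ) {u : ℝ} (hu : u ∈ Ioo 0 1) :
    HasDerivAt (scaleOfWeight t) ((√(u / (1 - u)))⁻¹ / (2 * t * (1 - u) ^ 2)) u := by
  have h1u : 0 < 1 - u := sub_pos.2 hu.2
  have hratio : HasDerivAt (fun u ↦ u / (1 - u)) (1 / (1 - u) ^ 2) u := by
    refine ((hasDerivAt_id' u).div ((hasDerivAt_id' u).const_sub 1) h1u.ne').congr_deriv ?_
    ring
  refine ((hratio.sqrt (div_pos hu.1 h1u).ne').div_const t).congr_deriv ?_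
  field_simp

lemma abs_deriv_mul_dfunScaleIntegrand_scaleOfWeight {t : ℝ} (ht : 0 < t) (c : ℝ) {u : ℝ}
    (hu : u ∈ Ioo 0 1) :
    |(√(u / (1 - u)))⁻¹ / (2 * t * (1 - u) ^ 2)| * dfunScaleIntegrand t c (scaleOfWeight t u) =
      t / π * (u ^ (-(1 : ℝ) / 2) * (t ^ 2 + (1 - t ^ 2) * u)⁻¹ * exp (c ^ 2 * u / 2)) := by
  obtain ⟨hu0, hu1⟩ := hu
  have h1u : 0 < 1 - u := sub_pos.2 hu1
  have hscale_sq : scaleOfWeight t u ^ 2 = u / (1 - u) / t ^ 2 := by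
    rw [scaleOfWeight, div_pow, sq_sqrt (div_pos hu0 h1u).le]
  have hscale : scaleOfWeight t u ^ 2 * t ^ 2 = u / (1 - u) := by
    rw [hscale_sq, div_mul_cancel₀ _ (by positivity)]
  have hone_add : 1 + u / (1 - u) = (1 - u)⁻¹ := by
    field_simp
    ring
  have hmix : t ^ 2 + u * (1 - t ^ 2) ≠ 0 := by nlinarith
  have hrpow : u ^ (-(1 : ℝ) / 2) = (√u)⁻¹ := by
    rw [neg_div, rpow_neg hu0.le, sqrt_eq_rpow, one_div]
  rw [dfunScaleIntegrand, hscale, hone_add, sqrt_inv, inv_inv, hrpow, sqrt_div hu0.le,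
    abs_of_pos (by positivity)]
  field_simp
  rw [sq_sqrt h1u.le, hscale_sq]
  field_simp
  ring

lemma setIntegral_dfunScaleIntegrand {t : ℝ} (ht : 0 < t) (c : ℝ) :
    ∫ l in Ioi 0, dfunScaleIntegrand t c l = t / π * ∫ u in Ioo (0 : ℝ) 1,
      u ^ (-(1 : ℝ) / 2) * (t ^ 2 + (1 - t ^ 2) * u)⁻¹ * exp (c ^ 2 * u / 2) := by
  rw [← (bijOn_scaleOfWeight ht).image_eq, integral_image_eq_integral_abs_deriv_smul
    measurableSet_Ioo (fun u hu ↦ (hasDerivAt_scaleOfWeight t hu).hasDerivWithinAt)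
    (bijOn_scaleOfWeight ht).injOn, ← integral_const_mul]
  exact setIntegral_congr_fun measurableSet_Ioo fun u hu ↦
    abs_deriv_mul_dfunScaleIntegrand_scaleOfWeight ht c hu

lemma Dfun_eq_integral_Ioo {t : ℝ} (ht : 0 < t) (c : ℝ) :
    Dfun t c = t / π * ∫ u in Ioo (0 : ℝ) 1,
      u ^ (-(1 : ℝ) / 2) * (t ^ 2 + (1 - t ^ 2) * u)⁻¹ * exp (c ^ 2 * u / 2) := by
  rw [Dfun_eq_setIntegral_dfunScaleIntegrand ht, setIntegral_dfunScaleIntegrand ht]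

lemma hs_mul (τ : ℝ) {a : ℝ} (ha : 0 < a) (θ : ℝ) : hs τ (a * θ) = a⁻¹ * hs (τ / a) θ := by
  unfold hs
  rw [← integral_const_mul]
  refine integral_congr_ae (.of_forall fun l ↦ ?_)
  have hsqrt : √(2 * π * (l ^ 2 * τ ^ 2)) = a * √(2 * π * (l ^ 2 * (τ / a) ^ 2)) := by
    have harg : 2 * π * (l ^ 2 * τ ^ 2) = a ^ 2 * (2 * π * (l ^ 2 * (τ / a) ^ 2)) := by
      field_simp
    rw [harg, sqrt_mul (sq_nonneg a), sqrt_sq ha.le]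
  simp only [gauss, hsqrt, mul_inv]
  field_simp

lemma Nvfun_eq_Dfun (r τ y ty : ℝ) {v : ℝ} (hv : 0 < v) :
    Nvfun r v τ y ty = Dfun (τ / √v) (√v * (y + ty / r)) := by
  have hsv : 0 < √v := sqrt_pos.2 hv
  have hcomp := Measure.integral_comp_mul_left
    (fun μ ↦ exp (-μ ^ 2 / (2 * v) + (y + ty / r) * μ) * hs τ μ) √v
  have hexp : ∀ ξ : ℝ, -(√v * ξ) ^ 2 / (2 * v) + (y + ty / r) * (√v * ξ) =
      -ξ ^ 2 / 2 + √v * (y + ty / r) * ξ := fun ξ ↦ by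
    rw [mul_pow, sq_sqrt hv.le]
    field_simp
  simp only [hexp, hs_mul τ hsv, mul_left_comm _ (√v)⁻¹, integral_const_mul,
    abs_of_pos (inv_pos.2 hsv), smul_eq_mul] at hcomp
  exact (mul_left_cancel₀ (inv_ne_zero hsv.ne') hcomp).symm

lemma gauss_sub (s x μ : ℝ) : gauss s (x - μ) = gauss s x * exp (-μ ^ 2 / (2 * s) + x / s * μ) := by
  simp only [gauss, mul_assoc, ← exp_add]
  congr 2
  ring

lemma gauss_sub_mul_gauss_sub {r v : ℝ} (hr : 0 < r) (hv : v = r / (1 + r)) (ty y μ : ℝ) :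
    gauss r (ty - μ) * gauss 1 (y - μ) =
      gauss r ty * gauss 1 y * exp (-μ ^ 2 / (2 * v) + (y + ty / r) * μ) := by
  rw [gauss_sub, gauss_sub, mul_mul_mul_comm, ← exp_add, hv]
  congr 2
  field_simp
  ring

lemma pred_eq {r v : ℝ} (hr : 0 < r) (hv : v = r / (1 + r)) (g : ℝ → ℝ) (y ty : ℝ) :
    pred r g y ty = gauss r ty * (∫ μ, exp (-μ ^ 2 / (2 * v) + (y + ty / r) * μ) * g μ) /
      ∫ μ, exp (-μ ^ 2 / 2 + y * μ) * g μ := by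
  have hnum : ∀ μ, gauss r (ty - μ) * gauss 1 (y - μ) * g μ = gauss r ty * gauss 1 y *
      (exp (-μ ^ 2 / (2 * v) + (y + ty / r) * μ) * g μ) := fun μ ↦ by
    rw [gauss_sub_mul_gauss_sub hr hv, mul_assoc]
  have hden : ∀ μ, gauss 1 (y - μ) * g μ = gauss 1 y * (exp (-μ ^ 2 / 2 + y * μ) * g μ) :=
    fun μ ↦ by rw [gauss_sub, mul_one, div_one, mul_assoc]
  simp only [pred, hnum, hden, integral_const_mul]
  rw [mul_right_comm, mul_comm (gauss 1 y), mul_div_mul_right _ _ (gauss_pos one_pos y).ne']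

/-- Pointwise decomposition of the predictive log-likelihood ratio under the
Horseshoe prior (Lemma on g̃). -/
theorem horseshoe_pointwise_log_ratio_decomposition
    (r v τ : ℝ) (hr : 0 < r) (hv : v = r / (1 + r)) (hτ : 0 < τ) :
    (∀ y : ℝ, Dfun τ y = τ / Real.pi *
      ∫ u in Set.Ioo (0 : ℝ) 1,
        u ^ (-(1 : ℝ) / 2) * (τ ^ 2 + (1 - τ ^ 2) * u)⁻¹ * Real.exp (y ^ 2 * u / 2)) ∧
    (∀ y ty : ℝ, Nvfun r v τ y ty = τ / (Real.pi * Real.sqrt v) *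
      ∫ u in Set.Ioo (0 : ℝ) 1,
        u ^ (-(1 : ℝ) / 2) * (τ ^ 2 / v + (1 - τ ^ 2 / v) * u)⁻¹ *
          Real.exp (v / 2 * (y + ty / r) ^ 2 * u)) ∧
    ∀ θ y ty : ℝ,
      Real.log (gauss r (ty - θ) / pred r (hs τ) y ty) =
        ty * θ / r - θ ^ 2 / (2 * r) - Real.log (Nvfun r v τ y ty) +
          Real.log (Dfun τ y) := by
  have hv0 : 0 < v := hv ▸ by positivity
  have hτv : 0 < τ / √v := div_pos hτ (sqrt_pos.2 hv0)
  refine ⟨Dfun_eq_integral_Ioo hτ, fun y ty ↦ ?_, fun θ y ty ↦ ?_⟩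
  · have hexp : ∀ u : ℝ, (√v * (y + ty / r)) ^ 2 * u / 2 = v / 2 * (y + ty / r) ^ 2 * u :=
      fun u ↦ by rw [mul_pow, sq_sqrt hv0.le]; ring
    rw [Nvfun_eq_Dfun r τ y ty hv0, Dfun_eq_integral_Ioo hτv, div_pow, sq_sqrt hv0.le, div_div,
      mul_comm √v]
    simp only [hexp]
  · have hN : 0 < Nvfun r v τ y ty := Nvfun_eq_Dfun r τ y ty hv0 ▸ Dfun_pos hτv _
    have hD : 0 < Dfun τ y := Dfun_pos hτ y
    rw [pred_eq hr hv, ← Nvfun, ← Dfun, gauss_sub, mul_div_assoc (gauss r ty) (Nvfun _ _ _ _ _),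
      mul_div_mul_left _ _ (gauss_pos hr ty).ne',
      log_div (exp_ne_zero _) (div_pos hN hD).ne', log_exp, log_div hN.ne' hD.ne']
    ring
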